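/- Let ν be a probability measure on ℝ with all moments finite, and define L_ν[f](x) = ∫ (f(x) − f(y))/(x − y) dν(y) for polynomials f (with the difference quotient extended to x = y by f'(x)). If ν_t is the semicircle law of mean αt and variance t, then for the generating function H(x,t,z) = ∑_{n≥0} Q_n(x,t) z^n = (1+tαz)/(1 − xz + t(αz+z²)), one has L_{ν_t}[H(·,t,z)](x) = z·H(x,t,z) (as an identity of formal power series in z, applying L_{ν_t} coefficientwise). -/

import Mathlib

open MeasureTheory Real Polynomial
open scoped NNReal ENNReal

/-- The difference quotient of a polynomial, extended to the diagonal by the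
derivative. -/
noncomputable def diffQuot (f : ℝ[X]) (x y : ℝ) : ℝ :=
  if y = x then (Polynomial.derivative f).eval x else (f.eval x - f.eval y) / (x - y)

/-- `L_ν[f](x) = ∫ (f(x) − f(y))/(x − y) dν(y)`. -/
noncomputable def Lop (ν : Measure ℝ) (f : ℝ[X]) (x : ℝ) : ℝ :=
  ∫ y, diffQuot f x y ∂ν

/-- The semicircle law with mean `αt` and variance `t`. -/
noncomputable def nuMeasure (α t : ℝ) : Measure ℝ :=
  volume.withDensity fun x =>
    ENNReal.ofReal ((1 / (2 * π * t)) * Real.sqrt (max (4 * t - (x - α * t) ^ 2) 0))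

/-! ### Difference quotient lemmas -/

lemma diffQuot_eq_eval_divByMonic (f : ℝ[X]) (x y : ℝ) :
    diffQuot f x y = (f /ₘ (X - C x)).eval y := by
  have hm : (X - C x).Monic := monic_X_sub_C x
  have hdecomp : C (f.eval x) + (X - C x) * (f /ₘ (X - C x)) = f := by
    conv_rhs => rw [← modByMonic_add_div f (X - C x)]
    rw [modByMonic_X_sub_C_eq_C_eval]
  set q := f /ₘ (X - C x) with hq
  unfold diffQuot
  split_ifs with h
  · subst h
    have := congrArg (fun p => (Polynomial.derivative p).eval y) hdecomp
    simp only [derivative_add, derivative_C, derivative_mul, derivative_sub,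
      derivative_X, eval_add, eval_mul, eval_sub, eval_X, eval_C, eval_zero, eval_one,
      zero_add, one_mul, sub_self, zero_mul, add_zero] at this
    linarith [this]
  · have hf : ∀ z, f.eval z = f.eval x + (z - x) * q.eval z := by
      intro z
      conv_lhs => rw [← hdecomp]
      simp [eval_add, eval_mul, eval_sub]
    have hxy : x - y ≠ 0 := sub_ne_zero.mpr (Ne.symm h)
    rw [hf y, hf x]
    field_simp
    ring

lemma diffQuot_one (x y : ℝ) : diffQuot 1 x y = 0 := by
  unfold diffQuot; split_ifs <;> simp

lemma diffQuot_add (p q : ℝ[X]) (x y : ℝ) :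
    diffQuot (p + q) x y = diffQuot p x y + diffQuot q x y := by
  unfold diffQuot; split_ifs with h
  · simp
  · simp only [eval_add]
    have : x - y ≠ 0 := sub_ne_zero.mpr (Ne.symm h)
    field_simp
    ring

lemma diffQuot_C_mul (c : ℝ) (p : ℝ[X]) (x y : ℝ) :
    diffQuot (C c * p) x y = c * diffQuot p x y := by
  unfold diffQuot; split_ifs with h
  · simp [mul_comm]
  · simp only [eval_mul, eval_C]
    have : x - y ≠ 0 := sub_ne_zero.mpr (Ne.symm h)
    field_simp

lemma diffQuot_X_mul (p : ℝ[X]) (x y : ℝ) :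
    diffQuot (X * p) x y = p.eval y + x * diffQuot p x y := by
  unfold diffQuot; split_ifs with h
  · subst h; simp [derivative_mul]
  · simp only [eval_mul, eval_X]
    have hxy : x - y ≠ 0 := sub_ne_zero.mpr (Ne.symm h)
    field_simp
    ring

/-! ### The semicircle density -/

noncomputable def rho (α t : ℝ) (y : ℝ) : ℝ :=
  (1 / (2 * π * t)) * Real.sqrt (max (4 * t - (y - α * t) ^ 2) 0)

lemma rho_continuous (α t : ℝ) : Continuous (rho α t) := by
  unfold rho; fun_prop

lemma rho_nonneg (α t : ℝ) (ht : 0 < t) (y : ℝ) : 0 ≤ rho α t y := by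
  unfold rho
  have : (0:ℝ) < 2 * π * t := by positivity
  positivity

lemma rho_zero_outside (α t : ℝ) {y : ℝ}
    (hy : y ∉ Set.Icc (α * t - 2 * Real.sqrt t) (α * t + 2 * Real.sqrt t)) :
    rho α t y = 0 := by
  rcases le_or_gt t 0 with h | h
  · unfold rho
    have : max (4 * t - (y - α * t) ^ 2) 0 = 0 := by
      rw [max_eq_right]; nlinarith [sq_nonneg (y - α * t)]
    rw [this, Real.sqrt_zero, mul_zero]
  · have hs : Real.sqrt t ^ 2 = t := Real.sq_sqrt h.le
    have h4 : 4 * t ≤ (y - α * t) ^ 2 := by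
      simp only [Set.mem_Icc, not_and_or, not_le] at hy
      rcases hy with h1 | h1 <;> nlinarith [Real.sqrt_nonneg t]
    unfold rho
    have : max (4 * t - (y - α * t) ^ 2) 0 = 0 := by
      rw [max_eq_right]; linarith
    rw [this, Real.sqrt_zero, mul_zero]

lemma nuMeasure_eq (α t : ℝ) :
    nuMeasure α t = volume.withDensity fun x => ((Real.toNNReal (rho α t x) : ℝ≥0) : ℝ≥0∞) :=
  rfl

lemma rho_meas (α t : ℝ) : Measurable fun x => Real.toNNReal (rho α t x) :=
  (continuous_real_toNNReal.comp (rho_continuous α t)).measurable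

lemma smul_eq_mul_rho (α t : ℝ) (ht : 0 < t) (g : ℝ → ℝ) :
    (fun x => Real.toNNReal (rho α t x) • g x) = fun x => rho α t x * g x := by
  funext x
  rw [NNReal.smul_def, Real.coe_toNNReal _ (rho_nonneg α t ht x), smul_eq_mul]

lemma integrable_mul_rho (α t : ℝ) (ht : 0 < t) (g : ℝ → ℝ) (hg : Continuous g) :
    Integrable (fun x => rho α t x * g x) volume := by
  apply Continuous.integrable_of_hasCompactSupport ((rho_continuous α t).mul hg)
  apply HasCompactSupport.intro (isCompact_Icc
    (a := α * t - 2 * Real.sqrt t) (b := α * t + 2 * Real.sqrt t))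
  intro y hy
  rw [Pi.mul_apply, rho_zero_outside α t hy, zero_mul]

lemma integrable_nu (α t : ℝ) (ht : 0 < t) (g : ℝ → ℝ) (hg : Continuous g) :
    Integrable g (nuMeasure α t) := by
  rw [nuMeasure_eq, integrable_withDensity_iff_integrable_smul (rho_meas α t),
    smul_eq_mul_rho α t ht]
  exact integrable_mul_rho α t ht g hg

lemma integral_nu (α t : ℝ) (ht : 0 < t) (g : ℝ → ℝ) :
    ∫ y, g y ∂(nuMeasure α t)
      = ∫ y in (α * t - 2 * Real.sqrt t)..(α * t + 2 * Real.sqrt t), rho α t y * g y := by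
  rw [nuMeasure_eq, integral_withDensity_eq_integral_smul (rho_meas α t)]
  have h1 : (fun x => Real.toNNReal (rho α t x) • g x) = fun x => rho α t x * g x :=
    smul_eq_mul_rho α t ht g
  rw [show (∫ x, Real.toNNReal (rho α t x) • g x) = ∫ x, rho α t x * g x from
    congrArg _ h1]
  have hab : α * t - 2 * Real.sqrt t ≤ α * t + 2 * Real.sqrt t := by
    have := Real.sqrt_nonneg t; linarith
  rw [intervalIntegral.integral_of_le hab, ← MeasureTheory.integral_Icc_eq_integral_Ioc]
  exact (setIntegral_eq_integral_of_forall_compl_eq_zero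
    (fun y hy => by rw [rho_zero_outside α t hy, zero_mul])).symm

/-! ### Trigonometric integrals -/

lemma integral_cos_eq_zero (c : ℝ) (hc : c ≠ 0) (hs : Real.sin (c * π) = 0) :
    ∫ θ in (0:ℝ)..π, Real.cos (c * θ) = 0 := by
  rw [intervalIntegral.integral_comp_mul_left (fun x => Real.cos x) hc]
  simp [integral_cos, hs]

lemma sin_mul_sin_int (k : ℕ) :
    ∫ θ in (0:ℝ)..π, Real.sin (k * θ) * Real.sin θ = if k = 1 then π / 2 else 0 := by
  rcases eq_or_ne k 1 with hk | hk
  · subst hk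
    simp only [Nat.cast_one, one_mul, if_pos rfl, ← sq]
    rw [integral_sin_sq]
    simp [Real.sin_pi, Real.cos_pi]
  · rw [if_neg hk]
    have key : ∀ θ : ℝ, Real.sin (k * θ) * Real.sin θ
        = (Real.cos (((k:ℝ) - 1) * θ) - Real.cos (((k:ℝ) + 1) * θ)) / 2 := by
      intro θ
      rw [Real.cos_sub_cos]
      have h1 : (((k:ℝ) - 1) * θ + ((k:ℝ) + 1) * θ) / 2 = k * θ := by ring
      have h2 : (((k:ℝ) - 1) * θ - ((k:ℝ) + 1) * θ) / 2 = -θ := by ring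
      rw [h1, h2, Real.sin_neg]
      ring
    simp only [key]
    rw [intervalIntegral.integral_div, intervalIntegral.integral_sub]
    · have e1 : ∫ θ in (0:ℝ)..π, Real.cos (((k:ℝ) - 1) * θ) = 0 := by
        apply integral_cos_eq_zero
        · intro h
          apply hk
          have : (k:ℝ) = 1 := by linarith [sub_eq_zero.mp h]
          exact_mod_cast this
        · rcases k with _ | n
          · norm_num
          · push_cast
            have : ((n:ℝ) + 1 - 1) * π = n * π := by ring
            rw [this, Real.sin_nat_mul_pi]
      have e2 : ∫ θ in (0:ℝ)..π, Real.cos (((k:ℝ) + 1) * θ) = 0 := by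
        apply integral_cos_eq_zero
        · positivity
        · have : ((k:ℝ) + 1) * π = (k + 1 : ℕ) * π := by push_cast; ring
          rw [this, Real.sin_nat_mul_pi]
      rw [e1, e2]; norm_num
    · apply Continuous.intervalIntegrable; fun_prop
    · apply Continuous.intervalIntegrable; fun_prop

/-! ### Substitution -/

lemma subst_cos (m r : ℝ) (F : ℝ → ℝ) (hF : Continuous F) :
    ∫ y in (m - r)..(m + r), F y
      = ∫ θ in (0:ℝ)..π, (r * Real.sin θ) * F (m + r * Real.cos θ) := by
  have h : ∀ θ ∈ Set.uIcc (0:ℝ) π, HasDerivAt (fun θ => m + r * Real.cos θ)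
      (-(r * Real.sin θ)) θ := by
    intro θ _
    simpa [mul_comm, neg_mul, mul_neg] using
      ((Real.hasDerivAt_cos θ).const_mul r).const_add m
  have h' : ContinuousOn (fun θ => -(r * Real.sin θ)) (Set.uIcc (0:ℝ) π) := by fun_prop
  have := intervalIntegral.integral_comp_smul_deriv h h' hF
  simp only [Real.cos_zero, Real.cos_pi, mul_one, mul_neg_one, smul_eq_mul] at this
  have hswap : (∫ y in (m + r)..(m + -r), F y) = -∫ y in (m - r)..(m + r), F y := by
    rw [intervalIntegral.integral_symm]
    ring_nf
  rw [hswap] at this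
  rw [← neg_neg (∫ y in (m - r)..(m + r), F y), ← this, ← intervalIntegral.integral_neg]
  congr 1
  funext θ
  simp only [Function.comp]
  ring

lemma rho_cos (α t : ℝ) (ht : 0 < t) (θ : ℝ) (hθ : θ ∈ Set.uIcc (0:ℝ) π) :
    rho α t (α * t + 2 * Real.sqrt t * Real.cos θ)
      = (1 / (2 * π * t)) * (2 * Real.sqrt t * Real.sin θ) := by
  have hpi := Real.pi_pos
  rw [Set.uIcc_of_le hpi.le] at hθ
  have hsin : 0 ≤ Real.sin θ := Real.sin_nonneg_of_nonneg_of_le_pi hθ.1 hθ.2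
  have hts : Real.sqrt t ^ 2 = t := Real.sq_sqrt ht.le
  have h1 : (α * t + 2 * Real.sqrt t * Real.cos θ - α * t) ^ 2
      = 4 * t * Real.cos θ ^ 2 := by ring_nf; nlinarith [hts]
  unfold rho
  rw [h1]
  have h2 : 4 * t - 4 * t * Real.cos θ ^ 2 = (2 * Real.sqrt t * Real.sin θ) ^ 2 := by
    have := Real.sin_sq_add_cos_sq θ
    nlinarith [hts]
  have h3 : max (4 * t - 4 * t * Real.cos θ ^ 2) 0 = (2 * Real.sqrt t * Real.sin θ) ^ 2 := by
    rw [h2, max_eq_left (sq_nonneg _)]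
  rw [h3, Real.sqrt_sq (by positivity)]

/-! ### Moments -/

lemma moment_eq (α t : ℝ) (ht : 0 < t) (p : ℝ[X]) :
    ∫ y, p.eval y ∂(nuMeasure α t)
      = (2 / π) * ∫ θ in (0:ℝ)..π,
          (p.eval (α * t + 2 * Real.sqrt t * Real.cos θ) * Real.sin θ) * Real.sin θ := by
  have hc : Continuous fun y => rho α t y * p.eval y :=
    (rho_continuous α t).mul p.continuous
  rw [integral_nu α t ht (fun y => p.eval y), subst_cos (α * t) (2 * Real.sqrt t) _ hc,
    ← intervalIntegral.integral_const_mul]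
  apply intervalIntegral.integral_congr
  intro θ hθ
  dsimp only
  rw [rho_cos α t ht θ hθ]
  have hu : Real.sqrt t * Real.sqrt t = t := Real.mul_self_sqrt ht.le
  have hπ : π ≠ 0 := Real.pi_ne_zero
  have hu0 : Real.sqrt t ≠ 0 := by
    have := Real.sqrt_pos.mpr ht
    exact this.ne'
  generalize hg : Real.sqrt t = u at hu hu0 ⊢
  rw [← hu]
  field_simp

/-! ### Trigonometric form of the polynomials -/

lemma sin_two_step (θ : ℝ) (j : ℝ) :
    2 * Real.cos θ * Real.sin ((j + 1) * θ) = Real.sin ((j + 2) * θ) + Real.sin (j * θ) := by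
  have h1 : (j + 2) * θ = (j + 1) * θ + θ := by ring
  have h2 : j * θ = (j + 1) * θ - θ := by ring
  rw [h1, h2, Real.sin_add, Real.sin_sub]
  ring

lemma Qtrig (α t : ℝ) (ht : 0 < t) (Q : ℕ → ℝ[X])
    (hQ0 : Q 0 = 1)
    (hQ1 : Polynomial.X * Q 0 = Q 1)
    (hQ : ∀ n, 1 ≤ n → Polynomial.X * Q n
      = Q (n + 1) + Polynomial.C (α * t) * Q n + Polynomial.C t * Q (n - 1)) :
    ∀ n θ, (Q n).eval (α * t + 2 * Real.sqrt t * Real.cos θ) * Real.sin θ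
      = Real.sqrt t ^ n * (Real.sin (((n : ℝ) + 1) * θ)
          + α * Real.sqrt t * Real.sin ((n : ℝ) * θ)) := by
  intro n
  induction n using Nat.strong_induction_on with
  | _ n ih =>
    match n with
    | 0 =>
      intro θ
      simp [hQ0]
    | 1 =>
      intro θ
      rw [← hQ1, hQ0]
      have hu : Real.sqrt t * Real.sqrt t = t := Real.mul_self_sqrt ht.le
      have C2 := sin_two_step θ 0
      push_cast
      simp only [zero_add, one_mul, zero_mul, Real.sin_zero, add_zero] at C2 ⊢
      simp only [eval_mul, eval_X, eval_one, mul_one]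
      generalize hg : Real.sqrt t = u at hu ⊢
      rw [← hu]
      ring_nf
      ring_nf at C2
      linear_combination u * C2
    | (k+2) =>
      intro θ
      have hrec := hQ (k+1) le_add_self
      have E := congrArg (fun p => Polynomial.eval
        (α * t + 2 * Real.sqrt t * Real.cos θ) p) hrec
      simp only [eval_mul, eval_add, eval_X, eval_C, Nat.add_sub_cancel] at E
      have A := ih (k+1) (by omega) θ
      have B := ih k (by omega) θ
      have C1 := sin_two_step θ ((k:ℝ)+1)
      have C2 := sin_two_step θ (k:ℝ)
      have hu : Real.sqrt t * Real.sqrt t = t := Real.mul_self_sqrt ht.le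
      generalize hg : Real.sqrt t = u at hu A B E ⊢
      rw [← hu] at E A B ⊢
      push_cast at A B ⊢
      ring_nf at A B C1 C2 E ⊢
      linear_combination (-Real.sin θ) * E + (2 * u * Real.cos θ) * A
        - (u * u) * B + u^(k+2) * C1 + α * u^(k+3) * C2

lemma MQ (α t : ℝ) (ht : 0 < t) (Q : ℕ → ℝ[X])
    (hQ0 : Q 0 = 1)
    (hQ1 : Polynomial.X * Q 0 = Q 1)
    (hQ : ∀ n, 1 ≤ n → Polynomial.X * Q n
      = Q (n + 1) + Polynomial.C (α * t) * Q n + Polynomial.C t * Q (n - 1)) :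
    ∀ n, ∫ y, (Q n).eval y ∂(nuMeasure α t)
      = if n = 0 then 1 else if n = 1 then α * t else 0 := by
  intro n
  rw [moment_eq α t ht]
  have key : ∀ θ : ℝ, ((Q n).eval (α * t + 2 * Real.sqrt t * Real.cos θ) * Real.sin θ)
        * Real.sin θ
      = Real.sqrt t ^ n * (Real.sin (((n + 1 : ℕ) : ℝ) * θ) * Real.sin θ)
        + (Real.sqrt t ^ n * (α * Real.sqrt t)) * (Real.sin ((n : ℝ) * θ) * Real.sin θ) := by
    intro θ
    rw [Qtrig α t ht Q hQ0 hQ1 hQ n θ]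
    push_cast
    ring
  simp only [key]
  have i1 : IntervalIntegrable (fun θ : ℝ => Real.sqrt t ^ n
      * (Real.sin (((n + 1 : ℕ) : ℝ) * θ) * Real.sin θ)) volume 0 π := by
    apply Continuous.intervalIntegrable; fun_prop
  have i2 : IntervalIntegrable (fun θ : ℝ => (Real.sqrt t ^ n * (α * Real.sqrt t))
      * (Real.sin ((n : ℝ) * θ) * Real.sin θ)) volume 0 π := by
    apply Continuous.intervalIntegrable; fun_prop
  rw [intervalIntegral.integral_add i1 i2, intervalIntegral.integral_const_mul,
    intervalIntegral.integral_const_mul, sin_mul_sin_int (n+1), sin_mul_sin_int n]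
  have hu : Real.sqrt t * Real.sqrt t = t := Real.mul_self_sqrt ht.le
  have hπ : π ≠ 0 := Real.pi_ne_zero
  match n with
  | 0 => norm_num
  | 1 =>
    norm_num
    field_simp
    linear_combination α * hu
  | (m+2) =>
    have hne : ¬ (m + 2 = 1) := by omega
    have hne0 : ¬ (m + 2 = 0) := by omega
    simp [hne, hne0]

/-! ### The operator on polynomials -/

lemma integrable_diffQuot (α t : ℝ) (ht : 0 < t) (f : ℝ[X]) (x : ℝ) :
    Integrable (fun y => diffQuot f x y) (nuMeasure α t) := by
  have h : (fun y => diffQuot f x y) = fun y => (f /ₘ (X - C x)).eval y :=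
    funext fun y => diffQuot_eq_eval_divByMonic f x y
  rw [h]
  exact integrable_nu α t ht _ (f /ₘ (X - C x)).continuous

lemma Lop_one (α t : ℝ) (x : ℝ) : Lop (nuMeasure α t) 1 x = 0 := by
  unfold Lop
  simp [diffQuot_one]

lemma Lop_add (α t : ℝ) (ht : 0 < t) (p q : ℝ[X]) (x : ℝ) :
    Lop (nuMeasure α t) (p + q) x
      = Lop (nuMeasure α t) p x + Lop (nuMeasure α t) q x := by
  unfold Lop
  simp only [diffQuot_add]
  exact integral_add (integrable_diffQuot α t ht p x) (integrable_diffQuot α t ht q x)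

lemma Lop_C_mul (α t : ℝ) (c : ℝ) (p : ℝ[X]) (x : ℝ) :
    Lop (nuMeasure α t) (C c * p) x = c * Lop (nuMeasure α t) p x := by
  unfold Lop
  simp only [diffQuot_C_mul]
  exact integral_const_mul c _

lemma Lop_X_mul (α t : ℝ) (ht : 0 < t) (p : ℝ[X]) (x : ℝ) :
    Lop (nuMeasure α t) (X * p) x
      = (∫ y, p.eval y ∂(nuMeasure α t)) + x * Lop (nuMeasure α t) p x := by
  unfold Lop
  simp only [diffQuot_X_mul]
  rw [integral_add (integrable_nu α t ht _ p.continuous)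
    ((integrable_diffQuot α t ht p x).const_mul x), integral_const_mul]

/-! ### Main theorem -/

/-- `L_{ν_t}[H(·,t,z)] = z·H(x,t,z)` coefficientwise: `L_{ν_t}[Q₀] = 0` and
`L_{ν_t}[Qₙ] = Qₙ₋₁` for `n ≥ 1`. -/
theorem Lop_nu_H (α t : ℝ) (ht : 0 < t) (Q : ℕ → ℝ[X])
    (hQ0 : Q 0 = 1)
    (hQ1 : Polynomial.X * Q 0 = Q 1)
    (hQ : ∀ n, 1 ≤ n → Polynomial.X * Q n
      = Q (n + 1) + Polynomial.C (α * t) * Q n + Polynomial.C t * Q (n - 1)) :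
    (∀ x, Lop (nuMeasure α t) (Q 0) x = 0) ∧
      ∀ n, 1 ≤ n → ∀ x, Lop (nuMeasure α t) (Q n) x = (Q (n - 1)).eval x := by
  have M := MQ α t ht Q hQ0 hQ1 hQ
  have P : ∀ k, ∀ x, Lop (nuMeasure α t) (Q (k+1)) x = (Q k).eval x := by
    intro k
    induction k using Nat.strong_induction_on with
    | _ k ih =>
      match k with
      | 0 =>
        intro x
        rw [← hQ1, hQ0, Lop_X_mul α t ht, Lop_one]
        have h0 := M 0
        rw [hQ0] at h0
        norm_num at h0 ⊢
        simpa using h0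
      | 1 =>
        intro x
        have hrec := hQ 1 le_rfl
        have h := congrArg (fun p => Lop (nuMeasure α t) p x) hrec
        rw [Lop_X_mul α t ht, Lop_add α t ht, Lop_add α t ht, Lop_C_mul, Lop_C_mul,
          M 1, ih 0 (by omega) x, hQ0, Lop_one] at h
        norm_num at h
        rw [← hQ1, hQ0]
        simp only [eval_mul, eval_X, eval_one, mul_one]
        linarith
      | (m+2) =>
        intro x
        have hrec := hQ (m+2) (by omega)
        have h := congrArg (fun p => Lop (nuMeasure α t) p x) hrec
        simp only [show m + 2 - 1 = m + 1 from rfl] at h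
        rw [Lop_X_mul α t ht, Lop_add α t ht, Lop_add α t ht, Lop_C_mul, Lop_C_mul,
          M (m+2), ih (m+1) (by omega) x, ih m (by omega) x,
          if_neg (by omega : ¬(m + 2 = 0)), if_neg (by omega : ¬(m + 2 = 1))] at h
        have e := congrArg (fun p => Polynomial.eval x p) (hQ (m+1) (by omega))
        simp only [show m + 1 - 1 = m from rfl, eval_mul, eval_add, eval_X, eval_C] at e
        linarith
  refine ⟨fun x => by rw [hQ0]; exact Lop_one α t x, fun n hn x => ?_⟩
  obtain ⟨k, rfl⟩ : ∃ k, n = k + 1 := ⟨n - 1, by omega⟩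
  simpa using P k x
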